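/- arXiv:2203.01122 — 3 statements merged into one kernel-verified Lean document; each statement's English description precedes it below -/
import Mathlib

section
/- Let $A$ be a discrete abelian group and $\varphi\colon A\to A$ a group endomorphism. For a finite subset $E\subseteq A$, let $T_n(E,\varphi)$ denote the subgroup of $A$ generated by $\bigcup_{i=0}^{n-1}\varphi^i(E)$. Then the sequence $a_n = \mathrm{rk}(T_n(E,\varphi))$ (torsion-free rank) is subadditive: $a_{n+m} \le a_n + a_m$ for all $n,m\ge 1$. -/
open scoped ENNReal

variable {A : Type*} [AddCommGroup A]

/-- The `n`-trajectory `T_n(E, φ)`: the subgroup generated by `⋃_{0 ≤ i < n} φ^i(E)`. -/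
def trajectory (φ : A →+ A) (E : Finset A) (n : ℕ) : AddSubgroup A :=
  AddSubgroup.closure (⋃ i ∈ Finset.range n, (⇑φ)^[i] '' (E : Set A))

/-- The torsion-free rank of `T_n(E, φ)` (as a natural number; `T_n(E, φ)` is finitely
generated, so its rank is finite). -/
noncomputable def trajRank (φ : A →+ A) (E : Finset A) (n : ℕ) : ℕ :=
  (Module.rank ℤ (trajectory φ E n)).toNat

/-- `mrk(E, φ) = lim_n rk(T_n(E,φ))/n`, which by Fekete's subadditive lemma exists and
equals the infimum `⨅ (n ≥ 1), rk(T_n(E,φ))/n`. -/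
noncomputable def mrkFinset (φ : A →+ A) (E : Finset A) : ℝ≥0∞ :=
  ⨅ n : ℕ+, (trajRank φ E (n : ℕ) : ℝ≥0∞) / (n : ℕ)

/-- The mean rank `mrk(A, φ) = sup_E mrk(E, φ)` over finite nonempty subsets `E ⊆ A`. -/
noncomputable def meanRank (φ : A →+ A) : ℝ≥0∞ :=
  ⨆ (E : Finset A) (_ : E.Nonempty), mrkFinset φ E

/-- The restriction of an endomorphism `φ` to a `φ`-invariant subgroup `B`. -/
def restrictEnd (φ : A →+ A) (B : AddSubgroup A) (h : ∀ x ∈ B, φ x ∈ B) : B →+ B where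
  toFun x := ⟨φ x, h x x.2⟩
  map_zero' := by ext; simp
  map_add' x y := by ext; simp

lemma rank_toIntSubmodule_aux (s : AddSubgroup A) :
    Module.rank ℤ s.toIntSubmodule = Module.rank ℤ s :=
  (AddEquiv.toIntLinearEquiv
    { toFun := fun x => (⟨x.1, x.2⟩ : s.toIntSubmodule)
      invFun := fun x => ⟨x.1, x.2⟩
      left_inv := fun _ => rfl
      right_inv := fun _ => rfl
      map_add' := fun _ _ => rfl }).rank_eq.symm

lemma rank_trajectory_eq (φ : A →+ A) (E : Finset A) (k : ℕ) :
    Module.rank ℤ (trajectory φ E k)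
      = Module.rank ℤ (Submodule.span ℤ (⋃ i ∈ Finset.range k, (⇑φ)^[i] '' (E : Set A))) := by
  rw [← rank_toIntSubmodule_aux (trajectory φ E k)]
  have h : AddSubgroup.toIntSubmodule (trajectory φ E k)
      = Submodule.span ℤ (⋃ i ∈ Finset.range k, (⇑φ)^[i] '' (E : Set A)) := by
    apply (AddSubgroup.toIntSubmodule : AddSubgroup A ≃o _).symm.injective
    simp only [OrderIso.symm_apply_apply]
    exact (Submodule.span_int_eq_addSubgroupClosure _).symm
  rw [h]


/-- The sequence `n ↦ rk(T_n(E, φ))` is subadditive. -/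
theorem trajectory_rank_subadditive (φ : A →+ A) (E : Finset A)
    (n m : ℕ) (hn : 1 ≤ n) (hm : 1 ≤ m) :
    Module.rank ℤ (trajectory φ E (n + m)) ≤
      Module.rank ℤ (trajectory φ E n) + Module.rank ℤ (trajectory φ E m) := by
  rw [rank_trajectory_eq, rank_trajectory_eq, rank_trajectory_eq]
  set f := φ.toIntLinearMap with hf
  set Sn := Submodule.span ℤ (⋃ i ∈ Finset.range n, (⇑φ)^[i] '' (E : Set A)) with hSn
  set Sm := Submodule.span ℤ (⋃ i ∈ Finset.range m, (⇑φ)^[i] '' (E : Set A)) with hSm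
  have hle : Submodule.span ℤ (⋃ i ∈ Finset.range (n + m), (⇑φ)^[i] '' (E : Set A))
      ≤ Sn ⊔ Sm.map (f ^ n) := by
    rw [Submodule.span_le]
    intro x hx
    simp only [Set.mem_iUnion, Finset.mem_range] at hx
    obtain ⟨i, hi, e, he, rfl⟩ := hx
    by_cases h : i < n
    · apply Submodule.mem_sup_left
      exact Submodule.subset_span (Set.mem_iUnion₂.2 ⟨i, Finset.mem_range.2 h, ⟨e, he, rfl⟩⟩)
    · push_neg at h
      apply Submodule.mem_sup_right
      have hx : (⇑φ)^[i] e = (f ^ n) ((⇑φ)^[i - n] e) := by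
        rw [Module.End.pow_apply]
        show (⇑φ)^[i] e = (⇑φ)^[n] ((⇑φ)^[i - n] e)
        rw [← Function.iterate_add_apply, Nat.add_sub_cancel' h]
      rw [hx]
      exact Submodule.mem_map_of_mem (Submodule.subset_span
        (Set.mem_iUnion₂.2 ⟨i - n, Finset.mem_range.2 (by omega), ⟨e, he, rfl⟩⟩))
  calc Module.rank ℤ (Submodule.span ℤ (⋃ i ∈ Finset.range (n + m), (⇑φ)^[i] '' (E : Set A)))
      ≤ Module.rank ℤ (Sn ⊔ Sm.map (f ^ n) : Submodule ℤ A) := Submodule.rank_mono hle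
    _ ≤ Module.rank ℤ Sn + Module.rank ℤ (Sm.map (f ^ n)) :=
        Submodule.rank_add_le_rank_add_rank _ _
    _ ≤ Module.rank ℤ Sn + Module.rank ℤ Sm := by
        gcongr
        exact rank_map_le _ _
end

section
/- Let $A$ be a discrete abelian group and $\varphi\colon A\to A$ an injective endomorphism. Let $\overrightarrow{A} = \varinjlim (A \xrightarrow{\varphi} A \xrightarrow{\varphi} A \to \cdots)$ be the colimit of the directed system where all maps are $\varphi$, and let $\overrightarrow{\varphi}\colon \overrightarrow{A}\to\overrightarrow{A}$ be the induced endomorphism. Then $\mathrm{mrk}(A,\varphi) = \mathrm{mrk}(\overrightarrow{A},\overrightarrow{\varphi})$. -/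
open scoped ENNReal

variable {A : Type*} [AddCommGroup A]

-- aux lemmas
section Aux
variable {B : Type*} [AddCommGroup B]

lemma iterate_comm_aux (φ : A →+ A) (ψ : B →+ B) (f : A →+ B)
    (hcomm : ∀ a, f (φ a) = ψ (f a)) :
    ∀ (i : ℕ) (a : A), f ((⇑φ)^[i] a) = (⇑ψ)^[i] (f a) := by
  intro i
  induction i with
  | zero => simp
  | succ k ih =>
    intro a
    rw [Function.iterate_succ_apply, ih, hcomm, ← Function.iterate_succ_apply]

lemma trajectory_image_aux [DecidableEq B] (φ : A →+ A) (ψ : B →+ B) (f : A →+ B)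
    (hcomm : ∀ a, f (φ a) = ψ (f a)) (E : Finset A) (n : ℕ) :
    trajectory ψ (E.image f) n = (trajectory φ E n).map f := by
  unfold trajectory
  rw [AddMonoidHom.map_closure]
  congr 1
  rw [Set.image_iUnion₂]
  refine Set.iUnion₂_congr fun i _ => ?_
  rw [Finset.coe_image, Set.image_image, Set.image_image]
  exact Set.image_congr fun a _ => (iterate_comm_aux φ ψ f hcomm i a).symm

lemma mrkFinset_image_aux [DecidableEq B] (φ : A →+ A) (ψ : B →+ B) (f : A →+ B)
    (hf : Function.Injective f) (hcomm : ∀ a, f (φ a) = ψ (f a)) (E : Finset A) :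
    mrkFinset ψ (E.image f) = mrkFinset φ E := by
  unfold mrkFinset
  refine iInf_congr fun n => ?_
  have : trajRank ψ (E.image f) n = trajRank φ E n := by
    unfold trajRank
    have e : trajectory ψ (E.image f) (n : ℕ) ≃+ trajectory φ E (n : ℕ) :=
      (trajectory_image_aux φ ψ f hcomm E (n : ℕ)) ▸
        ((trajectory φ E (n : ℕ)).equivMapOfInjective f hf).symm
    have h2 := LinearEquiv.lift_rank_eq e.toIntLinearEquiv
    rw [← Cardinal.toNat_lift, h2, Cardinal.toNat_lift]
  rw [this]

end Aux

open DirectSum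

/-- Mean rank is preserved by passing to the colimit `A → A → A → ⋯` along an
injective endomorphism `φ`. The colimit is realized as `(⊕_{n ≥ 1} A)/S` where `S` is
generated by the elements `λ_m(φ^{m-n}(a)) - λ_n(a)` for `n ≤ m`, and the induced
endomorphism `Φ` sends the class of `λ_n(a)` to the class of `λ_n(φ(a))`. -/
theorem meanRank_colimit_of_injective (φ : A →+ A) (hφ : Function.Injective φ)
    (S : AddSubgroup (⨁ _ : ℕ+, A))
    (hS : S = AddSubgroup.closure {x | ∃ (n m : ℕ+) (a : A), n ≤ m ∧
      x = DirectSum.of (fun _ : ℕ+ => A) m ((⇑φ)^[(m : ℕ) - (n : ℕ)] a)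
        - DirectSum.of (fun _ : ℕ+ => A) n a})
    (Φ : (⨁ _ : ℕ+, A) ⧸ S →+ (⨁ _ : ℕ+, A) ⧸ S)
    (hΦ : ∀ (n : ℕ+) (a : A),
      Φ (QuotientAddGroup.mk (DirectSum.of (fun _ : ℕ+ => A) n a))
        = QuotientAddGroup.mk (DirectSum.of (fun _ : ℕ+ => A) n (φ a))) :
    meanRank φ = meanRank Φ := by
  classical
  -- the directed system A → A → ⋯ along φ
  set F : ∀ (n m : ℕ+), n ≤ m → (A →+ A) := fun n m _ =>
    AddMonoidHom.mk' (⇑φ)^[(m : ℕ) - (n : ℕ)] (fun a b => by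
      simp [iterate_map_add]) with hF
  haveI hds : DirectedSystem (fun _ : ℕ+ => A) (fun n m h => F n m h) := by
    constructor
    · intro i x; simp [hF]
    · intro k j i hij hjk x
      show (⇑φ)^[(k : ℕ) - (j : ℕ)] ((⇑φ)^[(j : ℕ) - (i : ℕ)] x)
        = (⇑φ)^[(k : ℕ) - (i : ℕ)] x
      rw [← Function.iterate_add_apply]
      have h1 : (i : ℕ) ≤ (j : ℕ) := hij
      have h2 : (j : ℕ) ≤ (k : ℕ) := hjk
      congr 1
      omega
  set q : (⨁ _ : ℕ+, A) →+ AddCommGroup.DirectLimit (fun _ : ℕ+ => A) F :=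
    DirectSum.toAddMonoid (β := fun _ : ℕ+ => A)
      (fun n => AddCommGroup.DirectLimit.of (fun _ : ℕ+ => A) F n) with hq
  have hker : ∀ x ∈ S, x ∈ q.ker := by
    rw [hS]
    refine fun x hx => (AddSubgroup.closure_le _).mpr ?_ hx
    rintro y ⟨n, m, a, hnm, rfl⟩
    simp only [SetLike.mem_coe, AddMonoidHom.mem_ker, map_sub, hq, DirectSum.toAddMonoid_of,
      sub_eq_zero]
    exact AddCommGroup.DirectLimit.of_f (f := F) (hij := hnm) (x := a)
  set qbar := QuotientAddGroup.lift S q hker with hqbar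
  set ι : ∀ _ : ℕ+, A →+ (⨁ _ : ℕ+, A) ⧸ S := fun n =>
    (QuotientAddGroup.mk' S).comp (DirectSum.of (fun _ : ℕ+ => A) n) with hι
  have hqι : ∀ (n : ℕ+) (a : A),
      qbar (ι n a) = AddCommGroup.DirectLimit.of (fun _ : ℕ+ => A) F n a := by
    intro n a
    show qbar (QuotientAddGroup.mk (DirectSum.of (fun _ : ℕ+ => A) n a)) = _
    rw [hqbar, QuotientAddGroup.lift_mk]
    exact DirectSum.toAddMonoid_of
      (fun n => AddCommGroup.DirectLimit.of (fun _ : ℕ+ => A) F n) n a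
  have hinj : ∀ n : ℕ+, Function.Injective (ι n) := by
    intro n a b hab
    have h1 : AddCommGroup.DirectLimit.of (fun _ : ℕ+ => A) F n a
        = AddCommGroup.DirectLimit.of (fun _ : ℕ+ => A) F n b := by
      rw [← hqι, ← hqι, hab]
    have h0 : AddCommGroup.DirectLimit.of (fun _ : ℕ+ => A) F n (a - b) = 0 := by
      rw [map_sub, h1, sub_self]
    obtain ⟨m, hm, h⟩ := AddCommGroup.DirectLimit.of.zero_exact (G := fun _ : ℕ+ => A) (f := F) n (a - b) h0
    have hz : (⇑φ)^[(m : ℕ) - (n : ℕ)] (a - b) = (⇑φ)^[(m : ℕ) - (n : ℕ)] 0 := by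
      simpa [hF] using h
    have := (hφ.iterate ((m : ℕ) - (n : ℕ))) hz
    exact sub_eq_zero.mp this
  have hcommι : ∀ (n : ℕ+) (a : A), (ι n) (φ a) = Φ (ι n a) := by
    intro n a
    exact (hΦ n a).symm
  have hshift : ∀ (n m : ℕ+) (h : n ≤ m) (a : A),
      ι m ((⇑φ)^[(m : ℕ) - (n : ℕ)] a) = ι n a := by
    intro n m h a
    show QuotientAddGroup.mk _ = QuotientAddGroup.mk _
    rw [QuotientAddGroup.eq]
    have hgen : DirectSum.of (fun _ : ℕ+ => A) m ((⇑φ)^[(m : ℕ) - (n : ℕ)] a)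
        - DirectSum.of (fun _ : ℕ+ => A) n a ∈ S :=
      hS ▸ AddSubgroup.subset_closure ⟨n, m, a, h, rfl⟩
    have h2 := S.neg_mem hgen
    rw [neg_sub] at h2
    rw [neg_add_eq_sub]
    exact h2
  have hrep : ∀ x : (⨁ _ : ℕ+, A) ⧸ S, ∃ (n : ℕ+) (a : A), x = ι n a := by
    intro x
    obtain ⟨y, rfl⟩ := QuotientAddGroup.mk_surjective x
    induction y using DirectSum.induction_on with
    | zero => exact ⟨1, 0, by simp⟩
    | of n a => exact ⟨n, a, rfl⟩
    | add y z hy hz =>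
      obtain ⟨n, a, ha⟩ := hy
      obtain ⟨m, b, hb⟩ := hz
      refine ⟨max n m, (⇑φ)^[((max n m : ℕ+) : ℕ) - (n : ℕ)] a
        + (⇑φ)^[((max n m : ℕ+) : ℕ) - (m : ℕ)] b, ?_⟩
      rw [map_add, hshift n _ (le_max_left n m), hshift m _ (le_max_right n m),
        ← ha, ← hb]
      rfl
  unfold meanRank
  apply le_antisymm
  · refine iSup₂_le fun E hE => ?_
    rw [← mrkFinset_image_aux φ Φ (ι 1) (hinj 1) (hcommι 1) E]
    exact le_iSup₂ (f := fun (E : Finset ((⨁ _ : ℕ+, A) ⧸ S)) (_ : E.Nonempty) => mrkFinset Φ E) (E.image (ι 1)) (hE.image _)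
  · refine iSup₂_le fun Fs hFs => ?_
    choose g a hga using hrep
    set N : ℕ+ := Fs.sup' hFs g with hN
    have hrepF : ∀ x ∈ Fs, ι N ((⇑φ)^[(N : ℕ) - (g x : ℕ)] (a x)) = x := by
      intro x hx
      rw [hshift (g x) N (Finset.le_sup' g hx), ← hga x]
    set E : Finset A := Fs.image (fun x => (⇑φ)^[(N : ℕ) - (g x : ℕ)] (a x)) with hE
    have hFE : Fs = E.image (ι N) := by
      ext y
      simp only [hE, Finset.mem_image]
      constructor
      · intro hy
        exact ⟨_, ⟨y, hy, rfl⟩, hrepF y hy⟩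
      · rintro ⟨b, ⟨x, hx, rfl⟩, rfl⟩
        rw [hrepF x hx]
        exact hx
    rw [hFE, mrkFinset_image_aux φ Φ (ι N) (hinj N) (hcommι N) E]
    exact le_iSup₂ (f := fun (E : Finset A) (_ : E.Nonempty) => mrkFinset φ E) E (hFs.image _)
end

section
/- Let $\{\psi_{n,m}\colon A_n\to A_m\}_{n\le m}$ be a directed system of discrete abelian groups with endomorphisms $\varphi_n\colon A_n\to A_n$ satisfying $\psi_{n,m}\circ\varphi_n = \varphi_m\circ\psi_{n,m}$. Let $A'_n = A_n/\bigcup_{m\ge n}\ker(\psi_{n,m})$ with induced endomorphism $\varphi'_n$, and let $\Phi$ be the induced endomorphism on $\varinjlim A_n$. Then $\mathrm{mrk}(\varinjlim A_n, \Phi) = \sup_{n\ge 1}\mathrm{mrk}(A'_n, \varphi'_n)$. -/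
open scoped ENNReal

variable {A : Type*} [AddCommGroup A]

open DirectSum

section DirectedSystem

variable (G : ℕ → Type) [∀ n, AddCommGroup (G n)]

/-- The union of kernels `⋃_{m ≥ n} ker(ψ_{n,m}) ⊆ A_n` (a subgroup, by directedness). -/
def kerUnion (ψ : ∀ ⦃n m : ℕ⦄, n ≤ m → (G n →+ G m)) (n : ℕ) : AddSubgroup (G n) :=
  ⨆ m, ⨆ h : n ≤ m, (ψ h).ker

/-- The subgroup `S` of `⊕_n A_n` generated by the elements `λ_m(ψ_{n,m}(a)) - λ_n(a)`. -/
def colimRel (ψ : ∀ ⦃n m : ℕ⦄, n ≤ m → (G n →+ G m)) : AddSubgroup (⨁ n, G n) :=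
  AddSubgroup.closure {x | ∃ (n m : ℕ) (h : n ≤ m) (a : G n),
    x = DirectSum.of G m (ψ h a) - DirectSum.of G n a}

end DirectedSystem

section Transfer

variable {B : Type*} [AddCommGroup B]

theorem trajectory_image [DecidableEq B] (f : A →+ B) (φA : A →+ A) (φB : B →+ B)
    (hc : ∀ x, f (φA x) = φB (f x)) (E : Finset A) (k : ℕ) :
    trajectory φB (E.image f) k = (trajectory φA E k).map f := by
  classical
  rw [trajectory, trajectory, AddMonoidHom.map_closure, Finset.coe_image]
  congr 1
  simp only [Set.image_iUnion]
  refine Set.iUnion_congr fun i => Set.iUnion_congr fun _ => ?_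
  have hsc : Function.Semiconj (⇑f) (⇑φA) (⇑φB) := hc
  have h2 : (⇑φB)^[i] ∘ ⇑f = ⇑f ∘ (⇑φA)^[i] := funext fun x => ((hsc.iterate_right i) x).symm
  rw [← Set.image_comp, ← Set.image_comp, h2]

theorem trajRank_image [DecidableEq B] (f : A →+ B) (hf : Function.Injective f)
    (φA : A →+ A) (φB : B →+ B)
    (hc : ∀ x, f (φA x) = φB (f x)) (E : Finset A) (k : ℕ) :
    trajRank φB (E.image f) k = trajRank φA E k := by
  have e : trajectory φB (E.image f) k ≃+ trajectory φA E k :=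
    (AddEquiv.addSubgroupCongr (trajectory_image f φA φB hc E k)).trans
      (AddSubgroup.equivMapOfInjective (trajectory φA E k) f hf).symm
  have hr := LinearEquiv.lift_rank_eq e.toIntLinearEquiv
  unfold trajRank
  rw [← Cardinal.toNat_lift.{_} (Module.rank ℤ (trajectory φB (E.image f) k)),
    ← Cardinal.toNat_lift.{_} (Module.rank ℤ (trajectory φA E k)), hr]

theorem mrkFinset_image [DecidableEq B] (f : A →+ B) (hf : Function.Injective f)
    (φA : A →+ A) (φB : B →+ B)
    (hc : ∀ x, f (φA x) = φB (f x)) (E : Finset A) :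
    mrkFinset φB (E.image f) = mrkFinset φA E := by
  unfold mrkFinset
  exact iInf_congr fun n => by rw [trajRank_image f hf φA φB hc]

end Transfer

/-- Mean rank of the colimit of a directed system: with
`A'_n = A_n / ⋃_{m ≥ n} ker(ψ_{n,m})` and induced endomorphisms `φ'_n`, and `Φ` the
induced endomorphism of the colimit `(⊕_n A_n)/S`, one has
`mrk(colim A_n, Φ) = sup_n mrk(A'_n, φ'_n)`. -/
theorem meanRank_colimit (G : ℕ → Type) [∀ n, AddCommGroup (G n)]
    (ψ : ∀ ⦃n m : ℕ⦄, n ≤ m → (G n →+ G m))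
    (hid : ∀ n, ψ (le_refl n) = AddMonoidHom.id (G n))
    (hcomp : ∀ ⦃n m k : ℕ⦄ (h1 : n ≤ m) (h2 : m ≤ k) (a : G n),
      ψ h2 (ψ h1 a) = ψ (h1.trans h2) a)
    (φ : ∀ n, G n →+ G n)
    (hcommute : ∀ ⦃n m : ℕ⦄ (h : n ≤ m) (a : G n), ψ h (φ n a) = φ m (ψ h a))
    (φ' : ∀ n, (G n ⧸ kerUnion G ψ n) →+ (G n ⧸ kerUnion G ψ n))
    (hφ' : ∀ n (x : G n),
      φ' n (QuotientAddGroup.mk x) = QuotientAddGroup.mk (φ n x))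
    (Φ : ((⨁ n, G n) ⧸ colimRel G ψ) →+ ((⨁ n, G n) ⧸ colimRel G ψ))
    (hΦ : ∀ n (a : G n),
      Φ (QuotientAddGroup.mk (DirectSum.of G n a))
        = QuotientAddGroup.mk (DirectSum.of G n (φ n a))) :
    meanRank Φ = ⨆ n, meanRank (φ' n) := by
  classical
  set C := (⨁ n, G n) ⧸ colimRel G ψ with hC
  let f : ∀ i j : ℕ, i ≤ j → G i →+ G j := fun i j h => ψ h
  haveI hds : DirectedSystem G fun i j h => f i j h :=
    ⟨fun i x => by simp [f, hid], fun hij hjk x => by simp [f, hcomp]⟩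
  -- compatibility of `mk ∘ of` under the transition maps
  have hmk : ∀ ⦃n m : ℕ⦄ (h : n ≤ m) (a : G n),
      (QuotientAddGroup.mk (DirectSum.of G m (ψ h a)) : C)
        = QuotientAddGroup.mk (DirectSum.of G n a) := by
    intro n m h a
    rw [QuotientAddGroup.eq]
    have hg : DirectSum.of G m (ψ h a) - DirectSum.of G n a ∈ colimRel G ψ :=
      AddSubgroup.subset_closure ⟨n, m, h, a, rfl⟩
    have : -(DirectSum.of G m (ψ h a)) + DirectSum.of G n a
        = -(DirectSum.of G m (ψ h a) - DirectSum.of G n a) := by abel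
    rw [this]
    exact neg_mem hg
  -- the comparison map to Mathlib's direct limit
  let D := AddCommGroup.DirectLimit G f
  have hle : colimRel G ψ ≤
      (DirectSum.toAddMonoid fun n => AddCommGroup.DirectLimit.of G f n).ker := by
    rw [colimRel, AddSubgroup.closure_le]
    rintro x ⟨n, m, h, a, rfl⟩
    simp only [SetLike.mem_coe, AddMonoidHom.mem_ker, map_sub, DirectSum.toAddMonoid_of]
    rw [sub_eq_zero]
    exact AddCommGroup.DirectLimit.of_f (f := f) h a
  let F : C →+ D := QuotientAddGroup.lift _
    (DirectSum.toAddMonoid fun n => AddCommGroup.DirectLimit.of G f n) hle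
  -- kernel characterization
  have hker : ∀ (n : ℕ) (a : G n),
      (QuotientAddGroup.mk (DirectSum.of G n a) : C) = 0 ↔ a ∈ kerUnion G ψ n := by
    intro n a
    constructor
    · intro h0
      have hF : AddCommGroup.DirectLimit.of G f n a = 0 := by
        have h1 := congrArg F h0
        rw [map_zero] at h1
        rw [← h1]
        show _ = (DirectSum.toAddMonoid fun n => AddCommGroup.DirectLimit.of G f n)
          (DirectSum.of G n a)
        rw [DirectSum.toAddMonoid_of]
      obtain ⟨m, hm, hzero⟩ := AddCommGroup.DirectLimit.of.zero_exact n a hF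
      exact ((le_iSup (fun h : n ≤ m => (ψ h).ker) hm).trans
        (le_iSup (fun m : ℕ => ⨆ h : n ≤ m, (ψ h).ker) m)) hzero
    · intro ha
      have hle2 : kerUnion G ψ n ≤
          ((QuotientAddGroup.mk' (colimRel G ψ)).comp (DirectSum.of G n)).ker := by
        refine iSup_le fun m => iSup_le fun h => fun x hx => ?_
        have hx0 : ψ h x = 0 := hx
        simp only [AddMonoidHom.mem_ker, AddMonoidHom.comp_apply, QuotientAddGroup.mk'_apply]
        rw [← hmk h x, hx0]
        simp
      exact hle2 ha
  -- the injective equivariant maps from the quotients into the colimit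
  have hkl : ∀ n : ℕ, kerUnion G ψ n ≤
      ((QuotientAddGroup.mk' (colimRel G ψ)).comp (DirectSum.of G n)).ker := by
    intro n x hx
    exact (hker n x).2 hx
  let j : ∀ n : ℕ, (G n ⧸ kerUnion G ψ n) →+ C := fun n =>
    QuotientAddGroup.lift _ ((QuotientAddGroup.mk' (colimRel G ψ)).comp (DirectSum.of G n))
      (hkl n)
  have hj : ∀ (n : ℕ) (a : G n),
      j n (QuotientAddGroup.mk a) = (QuotientAddGroup.mk (DirectSum.of G n a) : C) := by
    intro n a; rfl
  have hjinj : ∀ n, Function.Injective (j n) := by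
    intro n
    rw [injective_iff_map_eq_zero]
    intro x hx
    induction x using QuotientAddGroup.induction_on with
    | H a =>
      rw [hj n a] at hx
      exact (QuotientAddGroup.eq_zero_iff a).2 ((hker n a).1 hx)
  have hjeq : ∀ (n : ℕ) (x : G n ⧸ kerUnion G ψ n), j n (φ' n x) = Φ (j n x) := by
    intro n x
    induction x using QuotientAddGroup.induction_on with
    | H a => rw [hφ' n a, hj, hj, hΦ]
  -- every element of the colimit comes from some component
  have hrep : ∀ z : ⨁ n, G n, ∃ (n : ℕ) (a : G n),
      (QuotientAddGroup.mk z : C) = QuotientAddGroup.mk (DirectSum.of G n a) := by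
    intro z
    induction z using DirectSum.induction_on with
    | zero => exact ⟨0, 0, by simp⟩
    | of i a => exact ⟨i, a, rfl⟩
    | add p q hp hq =>
      obtain ⟨n, a, ha⟩ := hp
      obtain ⟨m, b, hb⟩ := hq
      refine ⟨max n m, ψ (le_max_left n m) a + ψ (le_max_right n m) b, ?_⟩
      have : (QuotientAddGroup.mk (p + q) : C)
          = QuotientAddGroup.mk p + QuotientAddGroup.mk q := rfl
      rw [this, ha, hb, map_add, QuotientAddGroup.mk_add,
        hmk (le_max_left n m) a, hmk (le_max_right n m) b]
  -- a common component for any finite set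
  have hfin : ∀ E : Finset C, ∃ N : ℕ, ∀ x ∈ E, ∃ a : G N,
      x = QuotientAddGroup.mk (DirectSum.of G N a) := by
    intro E
    induction E using Finset.induction_on with
    | empty => exact ⟨0, by simp⟩
    | @insert x E hx ih =>
      obtain ⟨N₁, hN₁⟩ := ih
      obtain ⟨z, rfl⟩ := QuotientAddGroup.mk_surjective x
      obtain ⟨n, a, ha⟩ := hrep z
      refine ⟨max n N₁, fun y hy => ?_⟩
      rcases Finset.mem_insert.1 hy with rfl | hy
      · exact ⟨ψ (le_max_left n N₁) a, by rw [ha, hmk (le_max_left n N₁) a]⟩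
      · obtain ⟨b, hb⟩ := hN₁ y hy
        exact ⟨ψ (le_max_right n N₁) b, by rw [hb, hmk (le_max_right n N₁) b]⟩
  -- the two inequalities
  apply le_antisymm
  · refine iSup_le fun E => iSup_le fun hE => ?_
    obtain ⟨N, hN⟩ := hfin E
    let g : C → (G N ⧸ kerUnion G ψ N) := fun x =>
      if h : ∃ y, j N y = x then h.choose else 0
    have hg : ∀ x ∈ E, j N (g x) = x := by
      intro x hx
      obtain ⟨a, ha⟩ := hN x hx
      have hex : ∃ y, j N y = x := ⟨QuotientAddGroup.mk a, by rw [hj, ← ha]⟩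
      simp only [g, dif_pos hex]
      exact hex.choose_spec
    have himg : (E.image g).image (j N) = E := by
      ext x
      simp only [Finset.mem_image]
      constructor
      · rintro ⟨y, ⟨z, hz, rfl⟩, rfl⟩
        rw [hg z hz]; exact hz
      · intro hx; exact ⟨g x, ⟨x, hx, rfl⟩, hg x hx⟩
    have hEne : (E.image g).Nonempty := by
      obtain ⟨x, hx⟩ := hE
      exact ⟨g x, Finset.mem_image_of_mem g hx⟩
    calc mrkFinset Φ E = mrkFinset Φ ((E.image g).image (j N)) := by rw [himg]
      _ = mrkFinset (φ' N) (E.image g) :=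
          mrkFinset_image (j N) (hjinj N) (φ' N) Φ (hjeq N) (E.image g)
      _ ≤ meanRank (φ' N) := le_iSup₂ (f := fun (F : Finset (G N ⧸ kerUnion G ψ N))
          (_ : F.Nonempty) => mrkFinset (φ' N) F) (E.image g) hEne
      _ ≤ ⨆ n, meanRank (φ' n) := le_iSup (fun n => meanRank (φ' n)) N
  · refine iSup_le fun n => iSup_le fun F => iSup_le fun hF => ?_
    have : mrkFinset (φ' n) F = mrkFinset Φ (F.image (j n)) :=
      (mrkFinset_image (j n) (hjinj n) (φ' n) Φ (hjeq n) F).symm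
    rw [this]
    exact le_iSup₂ (f := fun (E : Finset C) (_ : E.Nonempty) => mrkFinset Φ E)
      (F.image (j n)) (hF.image (j n))
end
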